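/- Let ω₁, ω₂ be forms on M of positive degrees and s₁, s₁', s₂, s₂', t, t' ∈ I. Then ∫_{s₁,s₂}^t ω₁ω₂ = ∫_{s₁',s₂}^{s₂'} ω₁ω₂ + ∫_{s₁',s₂'}^{t'} ω₁ω₂ + ∫_{s₁',t'}^{t} ω₁ω₂ + (∫_{s₁}^{s₁'} ω₁) ∧ (∫_{s₂}^{s₂'} ω₂) + (∫_{s₁}^{s₁'} ω₁) ∧ (∫_{s₂'}^{t'} ω₂) + (∫_{s₁}^{s₁'} ω₁) ∧ (∫_{t'}^{t} ω₂). -/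
import Mathlib


/-!
An abstract (synthetic-differential-geometry style) setup for Chen's iterated integrals.
`ΩM` is the space of all differential forms on a (microlinear) space `M`, and `ΩP` the space
of all differential forms on its free path space `PM = M^I` (or a based path space).
`AM p` (resp. `AP p`) is the submodule of forms of degree `p`; `wM`, `wP` are the wedge
products, `dM`, `dP` the exterior derivatives, `pb t` the pullback `φ_t^*` along the
evaluation `φ_t : PM → M` at time `t`, `star t` the operation `ω ↦ (ω)_t^* = ι_t^* i_{∂/∂t} φ^* ω`,
`lie t` the operation `ω ↦ ι_t^* L_{∂/∂t} φ^* ω`, `intg s t` the pointwise parameter integral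
`∫_s^t · du` of a curve of forms on `PM`, and `Dt` the pointwise parameter derivative. -/
structure ChenSetup (ΩM ΩP : Type*) [AddCommGroup ΩM] [Module ℝ ΩM]
    [AddCommGroup ΩP] [Module ℝ ΩP] where
  AM : ℕ → Submodule ℝ ΩM
  AP : ℕ → Submodule ℝ ΩP
  wM : ΩM →ₗ[ℝ] ΩM →ₗ[ℝ] ΩM
  wP : ΩP →ₗ[ℝ] ΩP →ₗ[ℝ] ΩP
  dM : ΩM →ₗ[ℝ] ΩM
  dP : ΩP →ₗ[ℝ] ΩP
  oneP : ΩP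
  pb : ℝ → ΩM →ₗ[ℝ] ΩP
  star : ℝ → ΩM →ₗ[ℝ] ΩP
  lie : ℝ → ΩM →ₗ[ℝ] ΩP
  intg : ℝ → ℝ → (ℝ → ΩP) → ΩP
  Dt : (ℝ → ΩP) → ℝ → ΩP
  wM_assoc : ∀ a b c, wM (wM a b) c = wM a (wM b c)
  wP_assoc : ∀ a b c, wP (wP a b) c = wP a (wP b c)
  wP_one : ∀ a, wP oneP a = a
  one_wP : ∀ a, wP a oneP = a
  one_mem : oneP ∈ AP 0
  dM_mem : ∀ {p ω}, ω ∈ AM p → dM ω ∈ AM (p + 1)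
  dP_mem : ∀ {p ω}, ω ∈ AP p → dP ω ∈ AP (p + 1)
  wM_mem : ∀ {p q a b}, a ∈ AM p → b ∈ AM q → wM a b ∈ AM (p + q)
  wP_mem : ∀ {p q a b}, a ∈ AP p → b ∈ AP q → wP a b ∈ AP (p + q)
  pb_mem : ∀ (t : ℝ) {p ω}, ω ∈ AM p → pb t ω ∈ AP p
  star_mem : ∀ (t : ℝ) {p ω}, ω ∈ AM (p + 1) → star t ω ∈ AP p
  lie_mem : ∀ (t : ℝ) {p ω}, ω ∈ AM p → lie t ω ∈ AP p
  intg_mem : ∀ (s t : ℝ) {p} (f : ℝ → ΩP), (∀ u, f u ∈ AP p) → intg s t f ∈ AP p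
  pb_dM : ∀ (t : ℝ) (ω : ΩM), pb t (dM ω) = dP (pb t ω)
  pb_wM : ∀ (t : ℝ) (a b : ΩM), pb t (wM a b) = wP (pb t a) (pb t b)
  dP_wP : ∀ {p} (a b : ΩP), a ∈ AP p →
    dP (wP a b) = wP (dP a) b + ((-1 : ℝ) ^ p) • wP a (dP b)
  intg_add : ∀ (s t : ℝ) (f g : ℝ → ΩP),
    intg s t (fun u => f u + g u) = intg s t f + intg s t g
  intg_smul : ∀ (s t c : ℝ) (f : ℝ → ΩP), intg s t (fun u => c • f u) = c • intg s t f
  intg_interval : ∀ (s r t : ℝ) (f : ℝ → ΩP), intg s t f = intg s r f + intg r t f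
  wP_intg : ∀ (s t : ℝ) (a : ΩP) (f : ℝ → ΩP),
    wP a (intg s t f) = intg s t fun u => wP a (f u)
  intg_wP : ∀ (s t : ℝ) (f : ℝ → ΩP) (a : ΩP),
    wP (intg s t f) a = intg s t fun u => wP (f u) a

namespace ChenSetup

variable {ΩM ΩP : Type*} [AddCommGroup ΩM] [Module ℝ ΩM] [AddCommGroup ΩP] [Module ℝ ΩP]
variable (C : ChenSetup ΩM ΩP)

/-- Chen's single integral `∫_s^t ω = ∫_s^t (ω)_u^* du`. -/
def int1 (s t : ℝ) (ω : ΩM) : ΩP := C.intg s t fun u => C.star u ω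

/-- Chen's double iterated integral `∫_{s₁,s₂}^t ω₁ω₂ = ∫_{s₂}^t (∫_{s₁}^u ω₁) ∧ (ω₂)_u^* du`. -/
def int2 (s₁ s₂ t : ℝ) (ω₁ ω₂ : ΩM) : ΩP :=
  C.intg s₂ t fun u => C.wP (C.int1 s₁ u ω₁) (C.star u ω₂)

/-- Chen's triple iterated integral. -/
def int3 (s₁ s₂ s₃ t : ℝ) (ω₁ ω₂ ω₃ : ΩM) : ΩP :=
  C.intg s₃ t fun u => C.wP (C.int2 s₁ s₂ u ω₁ ω₂) (C.star u ω₃)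

/-- Iterated integral `∫_{0,…,0}^t` of a reversed list of forms. -/
def iterRev : ℝ → List ΩM → ΩP
  | _, [] => C.oneP
  | t, ω :: rest => C.intg 0 t fun u => C.wP (iterRev u rest) (C.star u ω)

/-- Iterated integral `∫_{0,…,0}^t ω₁ … ω_k`. -/
def iter (t : ℝ) (l : List ΩM) : ΩP := C.iterRev t l.reverse

/-- Chen's iterated integral `∫ ω₁ … ω_k = ∫_{0,…,0}^1 ω₁ … ω_k`. -/
def chen (l : List ΩM) : ΩP := C.iter 1 l

/-- The sequence `ω₁, …, ω_{i-1}, ω_i ∧ ω_{i+1}, ω_{i+2}, …` (0-based index `i`). -/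
def mergeAt (ω : ℕ → ΩM) (i : ℕ) : ℕ → ΩM :=
  fun j => if j < i then ω j else if j = i then C.wM (ω i) (ω (i + 1)) else ω (j + 1)

end ChenSetup


/-- Corollary 4.10.1. -/
theorem int2_full_decomposition {ΩM ΩP : Type*} [AddCommGroup ΩM] [Module ℝ ΩM]
    [AddCommGroup ΩP] [Module ℝ ΩP] (C : ChenSetup ΩM ΩP)
    {p₁ p₂ : ℕ} (hp₁ : 1 ≤ p₁) (hp₂ : 1 ≤ p₂) {ω₁ ω₂ : ΩM}
    (h₁ : ω₁ ∈ C.AM p₁) (h₂ : ω₂ ∈ C.AM p₂)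
    (s₁ s₁' s₂ s₂' t t' : ℝ) (hs₁ : s₁ ∈ Set.Icc (0 : ℝ) 1) (hs₁' : s₁' ∈ Set.Icc (0 : ℝ) 1)
    (hs₂ : s₂ ∈ Set.Icc (0 : ℝ) 1) (hs₂' : s₂' ∈ Set.Icc (0 : ℝ) 1)
    (ht : t ∈ Set.Icc (0 : ℝ) 1) (ht' : t' ∈ Set.Icc (0 : ℝ) 1) :
    C.int2 s₁ s₂ t ω₁ ω₂
      = C.int2 s₁' s₂ s₂' ω₁ ω₂ + C.int2 s₁' s₂' t' ω₁ ω₂ + C.int2 s₁' t' t ω₁ ω₂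
        + C.wP (C.int1 s₁ s₁' ω₁) (C.int1 s₂ s₂' ω₂)
        + C.wP (C.int1 s₁ s₁' ω₁) (C.int1 s₂' t' ω₂)
        + C.wP (C.int1 s₁ s₁' ω₁) (C.int1 t' t ω₂) := by
  have key : ∀ u : ℝ, C.int1 s₁ u ω₁ = C.int1 s₁ s₁' ω₁ + C.int1 s₁' u ω₁ := fun u =>
    C.intg_interval s₁ s₁' u _
  have h1 : C.int2 s₁ s₂ t ω₁ ω₂
      = C.wP (C.int1 s₁ s₁' ω₁) (C.int1 s₂ t ω₂) + C.int2 s₁' s₂ t ω₁ ω₂ := by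
    show C.intg s₂ t _ = _
    have : (fun u => C.wP (C.int1 s₁ u ω₁) (C.star u ω₂))
        = fun u => C.wP (C.int1 s₁ s₁' ω₁) (C.star u ω₂)
            + C.wP (C.int1 s₁' u ω₁) (C.star u ω₂) := by
      funext u; rw [key u, map_add, LinearMap.add_apply]
    rw [this, C.intg_add, ← C.wP_intg]
    rfl
  have h2 : C.int2 s₁' s₂ t ω₁ ω₂
      = C.int2 s₁' s₂ s₂' ω₁ ω₂ + C.int2 s₁' s₂' t' ω₁ ω₂ + C.int2 s₁' t' t ω₁ ω₂ := by
    show C.intg s₂ t _ = _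
    rw [C.intg_interval s₂ s₂' t _, C.intg_interval s₂' t' t _, ← add_assoc]
    rfl
  have h3 : C.int1 s₂ t ω₂
      = C.int1 s₂ s₂' ω₂ + C.int1 s₂' t' ω₂ + C.int1 t' t ω₂ := by
    show C.intg s₂ t _ = _
    rw [C.intg_interval s₂ s₂' t _, C.intg_interval s₂' t' t _, ← add_assoc]
    rfl
  rw [h1, h2, h3, map_add, map_add]
  abel
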